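/- arXiv:2308.15803 — 2 statements merged into one kernel-verified Lean document; each statement's English description precedes it below -/
import Mathlib

section
/- (Uniform bound on the transformed error.) Consider the system ẋ = f(x) + g(x)u with f, g locally Lipschitz and g(x)g(x)ᵀ positive definite, a funnel (γ_L, γ_U), and the funnel controller û with gain k > 0. Let K ⊂ ℝⁿ be the closure of the set of all points y with γ_{i,L}(t) ≤ y_i ≤ γ_{i,U}(t) for all i for some t ≥ 0, let Φ̄ = sup over y ∈ K, t ≥ 0 and i of |f_i(y) − ½ γ̇_{i,s}(t)| (which is finite), and let d̄ = sup over t ≥ 0 and i of γ_{i,d}(t). Let T > 0 and let x : [0,T] → ℝⁿ be differentiable with ẋ(t) = f(x(t)) + g(x(t))û(x(t),t) and γ_{i,L}(t) < x_i(t) < γ_{i,U}(t) for all t ∈ [0,T] and all i. Then for every i and every t ∈ [0,T], |ε̂_i(x(t),t)| ≤ max(|ε̂_i(x(0),0)|, d̄·Φ̄/(4k)); in particular the transformed error admits a bound independent of T, and the normalized error evolves in a compact subset of (−1,1)ⁿ. -/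
/-!
Along a closed-loop solution the controller cancels the `γ̇_d` term, so the transformed
error `ε = ε̂ᵢ` obeys `ε̇ = ξ̂ᵢ (φ − k ξ̂ᵢ ε)` with `φ = fᵢ(x) − ½ γ̇ᵢ,ₛ`. The funnel is
bounded, so `K` is compact and `|φ| ≤ Φ̄` is a genuine bound; together with `ξ̂ᵢ ≥ 4 / d̄`
this makes `ε ε̇ ≤ 0` as soon as `|ε| > d̄ Φ̄ / (4k)`, hence `|ε|` can never rise above
`max |ε(0)| (d̄ Φ̄ / (4k))`.
-/

open Matrix Set

/-- Normalized error `ê = (2z − (U + L))/(U − L)`. -/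
noncomputable def nerr (L U z : ℝ) : ℝ := (2 * z - (U + L)) / (U - L)

/-- Transformed error `ε̂ = ln((1 + ê)/(1 − ê))`. -/
noncomputable def terr (L U z : ℝ) : ℝ := Real.log ((1 + nerr L U z) / (1 - nerr L U z))

/-- Diagonal gain entry `ξ̂ = 4/((U − L)(1 − ê²))`. -/
noncomputable def xhat (L U z : ℝ) : ℝ := 4 / ((U - L) * (1 - (nerr L U z) ^ 2))

/-- The funnel controller
`û(y,t) = −g(y)ᵀ(g(y)g(y)ᵀ)⁻¹ (k ξ̂(y,t) ε̂(y,t) − ½ γ̇_d(t) ê(y,t))`. -/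
noncomputable def funnelController {n m : ℕ} (k : ℝ)
    (g : (Fin n → ℝ) → Matrix (Fin n) (Fin m) ℝ)
    (γL γU γL' γU' : ℝ → Fin n → ℝ) (y : Fin n → ℝ) (t : ℝ) : Fin m → ℝ :=
  -((g y)ᵀ.mulVec (((g y * (g y)ᵀ)⁻¹).mulVec (fun i =>
      k * xhat (γL t i) (γU t i) (y i) * terr (γL t i) (γU t i) (y i)
        - (1 / 2) * (γU' t i - γL' t i) * nerr (γL t i) (γU t i) (y i))))

theorem nerr_mem_Ioo {L U z : ℝ} (hL : L < z) (hU : z < U) : nerr L U z ∈ Ioo (-1) 1 := by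
  have hd : 0 < U - L := by linarith
  unfold nerr
  exact ⟨by rw [lt_div_iff₀ hd]; linarith, by rw [div_lt_one hd]; linarith⟩

theorem terr_eq_log_div {L U z : ℝ} (h : U ≠ L) :
    terr L U z = Real.log ((z - L) / (U - z)) := by
  have hd : U - L ≠ 0 := sub_ne_zero.2 h
  unfold terr nerr
  rw [one_add_div hd, one_sub_div hd, div_div_div_cancel_right₀ hd,
    show U - L - (2 * z - (U + L)) = 2 * (U - z) by ring,
    show U - L + (2 * z - (U + L)) = 2 * (z - L) by ring, mul_div_mul_left _ _ two_ne_zero]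

theorem xhat_eq {L U z : ℝ} (hL : L < z) (hU : z < U) :
    xhat L U z = (U - L) / ((z - L) * (U - z)) := by
  have h1 : z - L ≠ 0 := by linarith
  have h2 : U - z ≠ 0 := by linarith
  have hd : U - L ≠ 0 := by linarith
  unfold xhat nerr
  rw [div_pow, one_sub_div (pow_ne_zero 2 hd),
    show (U - L) ^ 2 - (2 * z - (U + L)) ^ 2 = 4 * ((z - L) * (U - z)) by ring]
  field_simp

theorem four_div_le_xhat {L U z d : ℝ} (hL : L < z) (hU : z < U) (hd : U - L ≤ d) :
    4 / d ≤ xhat L U z := by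
  obtain ⟨h1, h2⟩ := nerr_mem_Ioo hL hU
  have hsq : 0 < 1 - nerr L U z ^ 2 := by nlinarith
  unfold xhat
  gcongr
  · exact mul_pos (by linarith) hsq
  · nlinarith [sq_nonneg (nerr L U z)]

theorem terr_hasDerivAt {L U z : ℝ → ℝ} {l' u' z' s : ℝ}
    (hL : HasDerivAt L l' s) (hU : HasDerivAt U u' s) (hz : HasDerivAt z z' s)
    (hLz : L s < z s) (hzU : z s < U s) :
    HasDerivAt (fun τ => terr (L τ) (U τ) (z τ))
      (xhat (L s) (U s) (z s) *
        (z' - (u' + l') / 2 - nerr (L s) (U s) (z s) * (u' - l') / 2)) s := by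
  have h1 : z s - L s ≠ 0 := by linarith
  have h2 : U s - z s ≠ 0 := by linarith
  have hd : U s - L s ≠ 0 := by linarith
  have hq : HasDerivAt (fun τ => (z τ - L τ) / (U τ - z τ))
      (((z' - l') * (U s - z s) - (z s - L s) * (u' - z')) / (U s - z s) ^ 2) s :=
    (hz.sub hL).div (hU.sub hz) h2
  have hev : (fun τ => terr (L τ) (U τ) (z τ)) =ᶠ[nhds s]
      fun τ => Real.log ((z τ - L τ) / (U τ - z τ)) :=
    ((hU.continuousAt.sub hL.continuousAt).eventually_ne hd).mono
      fun τ h => terr_eq_log_div (sub_ne_zero.1 h)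
  refine ((hq.log (div_ne_zero h1 h2)).congr_of_eventuallyEq hev).congr_deriv ?_
  rw [xhat_eq hLz hzU, nerr]
  field_simp
  ring

theorem mul_mul_sub_nonpos {e ξ φ Φ k d : ℝ} (hk : 0 < k) (hd : 0 < d) (hφ : |φ| ≤ Φ)
    (hξ : 4 / d ≤ ξ) (he : d * Φ / (4 * k) < |e|) : e * (ξ * (φ - k * ξ * e)) ≤ 0 := by
  have hξ0 : 0 < ξ := (by positivity : (0 : ℝ) < 4 / d).trans_le hξ
  have hΦ : Φ ≤ k * ξ * |e| := by
    have h4 : 4 ≤ ξ * d := (div_le_iff₀ hd).1 hξ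
    rw [div_lt_iff₀ (by positivity)] at he
    refine le_of_mul_le_mul_left ?_ hd
    nlinarith [mul_le_mul_of_nonneg_right h4 (mul_nonneg hk.le (abs_nonneg e))]
  have hcore : e * (φ - k * ξ * e) ≤ 0 :=
    calc e * (φ - k * ξ * e) = e * φ - k * ξ * (|e| * |e|) := by rw [abs_mul_abs_self]; ring
      _ ≤ |e| * Φ - k * ξ * (|e| * |e|) := by
        refine sub_le_sub_right ?_ _
        exact (le_abs_self _).trans ((abs_mul e φ).le.trans
          (mul_le_mul_of_nonneg_left hφ (abs_nonneg e)))
      _ = |e| * (Φ - k * ξ * |e|) := by ring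
      _ ≤ 0 := mul_nonpos_of_nonneg_of_nonpos (abs_nonneg e) (by linarith)
  rw [mul_left_comm]
  exact mul_nonpos_of_nonneg_of_nonpos hξ0.le hcore

theorem abs_le_max_of_mul_deriv_nonpos {E E' : ℝ → ℝ} {a b B : ℝ}
    (hE : ∀ s ∈ Icc a b, HasDerivAt E (E' s) s)
    (hout : ∀ s ∈ Icc a b, B < |E s| → E s * E' s ≤ 0) :
    ∀ t ∈ Icc a b, |E t| ≤ max |E a| B := by
  set M := max |E a| B
  have hM : 0 ≤ M := (abs_nonneg _).trans (le_max_left _ _)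
  intro t ht
  -- fencing needs a strict inequality at contact, hence the rising barriers
  -- `(M + ε (1 + s - a)) ^ 2`
  have hfence : ∀ ε > 0, |E t| ≤ M + ε * (1 + (t - a)) := by
    intro ε hε
    have hbarrier : ∀ s, HasDerivAt (fun s => (M + ε * (1 + (s - a))) ^ 2)
        (2 * (M + ε * (1 + (s - a))) * ε) s := fun s =>
      (((((hasDerivAt_id' s).sub_const a).const_add 1).const_mul ε).const_add M).fun_pow 2
        |>.congr_deriv (by norm_num)
    refine abs_le_of_sq_le_sq ?_ (by nlinarith [ht.1])
    refine image_le_of_deriv_right_lt_deriv_boundary (f := fun s => E s ^ 2)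
      (f' := fun s => 2 * E s * E' s)
      (fun s hs => (hE s hs).continuousAt.continuousWithinAt.pow 2)
      (fun s hs => ((hE s (Ico_subset_Icc_self hs)).fun_pow 2).hasDerivWithinAt.congr_deriv
        (by norm_num)) ?_ hbarrier ?_ ht
    · simp only [sub_self, add_zero, mul_one, ← sq_abs (E a)]
      exact pow_le_pow_left₀ (abs_nonneg _) (by linarith [le_max_left |E a| B]) 2
    · intro s hs hcontact
      have hpos : 0 < M + ε * (1 + (s - a)) := by nlinarith [hs.1]
      have habs : |E s| = M + ε * (1 + (s - a)) := by
        rw [← abs_of_pos hpos]; exact sq_eq_sq_iff_abs_eq_abs _ _ |>.1 hcontact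
      have hout_s := hout s (Ico_subset_Icc_self hs) (by
        rw [habs]; nlinarith [le_max_right |E a| B, hs.1])
      nlinarith
  refine le_of_forall_pos_le_add fun δ hδ => ?_
  have hc : 0 < 1 + (t - a) := by linarith [ht.1]
  simpa [div_mul_cancel₀ δ hc.ne'] using hfence (δ / (1 + (t - a))) (div_pos hδ hc)

theorem mulVec_funnelController {n m : ℕ} (k : ℝ)
    (g : (Fin n → ℝ) → Matrix (Fin n) (Fin m) ℝ) (γL γU γL' γU' : ℝ → Fin n → ℝ)
    (y : Fin n → ℝ) (t : ℝ) (hg : IsUnit (g y * (g y)ᵀ)) :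
    g y *ᵥ funnelController k g γL γU γL' γU' y t = fun i =>
      -(k * xhat (γL t i) (γU t i) (y i) * terr (γL t i) (γU t i) (y i)
        - (1 / 2) * (γU' t i - γL' t i) * nerr (γL t i) (γU t i) (y i)) := by
  rw [funnelController, mulVec_neg, mulVec_mulVec, mulVec_mulVec,
    mul_nonsing_inv _ ((isUnit_iff_isUnit_det _).1 hg), one_mulVec]
  rfl

theorem hasDerivAt_terr_of_closedLoop {n m : ℕ} {f : (Fin n → ℝ) → (Fin n → ℝ)}
    {g : (Fin n → ℝ) → Matrix (Fin n) (Fin m) ℝ} {γL γU γL' γU' : ℝ → Fin n → ℝ}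
    {x : ℝ → Fin n → ℝ} {k s : ℝ} {i : Fin n} (hg : IsUnit (g (x s) * (g (x s))ᵀ))
    (hγL : HasDerivAt γL (γL' s) s) (hγU : HasDerivAt γU (γU' s) s)
    (hx : HasDerivAt x (f (x s) + g (x s) *ᵥ funnelController k g γL γU γL' γU' (x s) s) s)
    (hin : γL s i < x s i ∧ x s i < γU s i) :
    HasDerivAt (fun τ => terr (γL τ i) (γU τ i) (x τ i))
      (xhat (γL s i) (γU s i) (x s i) * (f (x s) i - 1 / 2 * (γU' s i + γL' s i)
        - k * xhat (γL s i) (γU s i) (x s i) * terr (γL s i) (γU s i) (x s i))) s := by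
  have h := terr_hasDerivAt (hasDerivAt_pi.1 hγL i) (hasDerivAt_pi.1 hγU i)
    (hasDerivAt_pi.1 hx i) hin.1 hin.2
  rw [Pi.add_apply, mulVec_funnelController k g γL γU γL' γU' (x s) s hg] at h
  convert h using 2
  ring

theorem abs_apply_le_of_norm_le {ι : Type*} [Fintype ι] {v : ι → ℝ} {C : ℝ}
    (h : ‖v‖ ≤ C) (i : ι) : |v i| ≤ C :=
  (norm_le_pi_norm v i).trans h

theorem isBounded_setOf_mem_funnel {n : ℕ} {γL γU : ℝ → Fin n → ℝ} {S : Set ℝ} {C : ℝ}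
    (hL : ∀ t ∈ S, ‖γL t‖ ≤ C) (hU : ∀ t ∈ S, ‖γU t‖ ≤ C) :
    Bornology.IsBounded {y : Fin n → ℝ | ∃ t ∈ S, ∀ i, γL t i ≤ y i ∧ y i ≤ γU t i} := by
  refine (Metric.isBounded_Icc (fun _ => -C) fun _ => C).subset ?_
  rintro y ⟨t, ht, hy⟩
  refine ⟨fun i => ?_, fun i => ?_⟩
  · exact (abs_le.1 (abs_apply_le_of_norm_le (hL t ht) i)).1.trans (hy i).1
  · exact (hy i).2.trans (abs_le.1 (abs_apply_le_of_norm_le (hU t ht) i)).2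

theorem bddAbove_setOf_abs_sub_half_add {n : ℕ} {f : (Fin n → ℝ) → (Fin n → ℝ)}
    {γL' γU' : ℝ → Fin n → ℝ} {K : Set (Fin n → ℝ)} {S : Set ℝ} {C : ℝ}
    (hK : IsCompact K) (hf : ContinuousOn f K)
    (hL' : ∀ t ∈ S, ‖γL' t‖ ≤ C) (hU' : ∀ t ∈ S, ‖γU' t‖ ≤ C) :
    BddAbove {r : ℝ | ∃ y ∈ K, ∃ t ∈ S, ∃ i,
      r = |f y i - (1 / 2) * (γU' t i + γL' t i)|} := by
  obtain ⟨Cf, hCf⟩ := hK.exists_bound_of_continuousOn hf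
  refine ⟨Cf + C, ?_⟩
  rintro _ ⟨y, hy, t, ht, i, rfl⟩
  have hfy := abs_le.1 (abs_apply_le_of_norm_le (hCf y hy) i)
  have hLt := abs_le.1 (abs_apply_le_of_norm_le (hL' t ht) i)
  have hUt := abs_le.1 (abs_apply_le_of_norm_le (hU' t ht) i)
  exact abs_le.2 ⟨by linarith, by linarith⟩

theorem bddAbove_setOf_sub_apply {n : ℕ} {γL γU : ℝ → Fin n → ℝ} {S : Set ℝ} {C : ℝ}
    (hL : ∀ t ∈ S, ‖γL t‖ ≤ C) (hU : ∀ t ∈ S, ‖γU t‖ ≤ C) :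
    BddAbove {r : ℝ | ∃ t ∈ S, ∃ i, r = γU t i - γL t i} := by
  refine ⟨2 * C, ?_⟩
  rintro _ ⟨t, ht, i, rfl⟩
  linarith [abs_le.1 (abs_apply_le_of_norm_le (hL t ht) i),
    abs_le.1 (abs_apply_le_of_norm_le (hU t ht) i)]

theorem transformed_error_uniform_bound_general {n m : ℕ}
    (f : (Fin n → ℝ) → (Fin n → ℝ))
    (g : (Fin n → ℝ) → Matrix (Fin n) (Fin m) ℝ)
    (hf : LocallyLipschitz f)
    (hpd : ∀ y, (g y * (g y)ᵀ).PosDef)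
    (γL γU γL' γU' : ℝ → Fin n → ℝ)
    (hγL : ∀ t ∈ Ici (0 : ℝ), HasDerivAt γL (γL' t) t)
    (hγU : ∀ t ∈ Ici (0 : ℝ), HasDerivAt γU (γU' t) t)
    (hbdd : ∃ C : ℝ, ∀ t ∈ Ici (0 : ℝ),
      ‖γL t‖ ≤ C ∧ ‖γU t‖ ≤ C ∧ ‖γL' t‖ ≤ C ∧ ‖γU' t‖ ≤ C)
    (k : ℝ) (hk : 0 < k)
    (K : Set (Fin n → ℝ))
    (hK : K = closure {y : Fin n → ℝ | ∃ t ∈ Ici (0 : ℝ), ∀ i, γL t i ≤ y i ∧ y i ≤ γU t i})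
    (Φbar dbar : ℝ)
    (hΦbar : Φbar = sSup {r : ℝ | ∃ y ∈ K, ∃ t ∈ Ici (0 : ℝ), ∃ i,
      r = |f y i - (1 / 2) * (γU' t i + γL' t i)|})
    (hdbar : dbar = sSup {r : ℝ | ∃ t ∈ Ici (0 : ℝ), ∃ i, r = γU t i - γL t i})
    (T : ℝ)
    (x : ℝ → Fin n → ℝ)
    (hode : ∀ t ∈ Icc (0 : ℝ) T,
      HasDerivAt x
        (f (x t) + (g (x t)).mulVec (funnelController k g γL γU γL' γU' (x t) t)) t)
    (hin : ∀ t ∈ Icc (0 : ℝ) T, ∀ i, γL t i < x t i ∧ x t i < γU t i) :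
    ∀ i, ∀ t ∈ Icc (0 : ℝ) T,
      |terr (γL t i) (γU t i) (x t i)| ≤
        max (|terr (γL 0 i) (γU 0 i) (x 0 i)|) (dbar * Φbar / (4 * k)) := by
  obtain ⟨C, hC⟩ := hbdd
  intro i t ht
  have hKc : IsCompact K := hK ▸ (isBounded_setOf_mem_funnel (fun s hs => (hC s hs).1)
    fun s hs => (hC s hs).2.1).isCompact_closure
  have hΦ : ∀ s ∈ Icc 0 T, |f (x s) i - 1 / 2 * (γU' s i + γL' s i)| ≤ Φbar := fun s hs =>
    hΦbar ▸ le_csSup (bddAbove_setOf_abs_sub_half_add hKc hf.continuous.continuousOn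
        (fun s hs => (hC s hs).2.2.1) fun s hs => (hC s hs).2.2.2)
      ⟨x s, hK ▸ subset_closure ⟨s, hs.1, fun j => ⟨(hin s hs j).1.le, (hin s hs j).2.le⟩⟩,
        s, hs.1, i, rfl⟩
  have hd : ∀ s ∈ Icc 0 T, γU s i - γL s i ≤ dbar := fun s hs =>
    hdbar ▸ le_csSup (bddAbove_setOf_sub_apply (fun s hs => (hC s hs).1)
      fun s hs => (hC s hs).2.1) ⟨s, hs.1, i, rfl⟩
  have hsub : Icc 0 t ⊆ Icc 0 T := Icc_subset_Icc_right ht.2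
  refine abs_le_max_of_mul_deriv_nonpos
    (fun s hs => hasDerivAt_terr_of_closedLoop (hpd _).isUnit (hγL s hs.1) (hγU s hs.1)
      (hode s (hsub hs)) (hin s (hsub hs) i))
    (fun s hs hB => ?_) t ⟨ht.1, le_rfl⟩
  obtain ⟨hLx, hxU⟩ := hin s (hsub hs) i
  exact mul_mul_sub_nonpos hk (by linarith [hd s (hsub hs)]) (hΦ s (hsub hs))
    (four_div_le_xhat hLx hxU (hd s (hsub hs))) hB

/-- Uniform bound on the transformed error: along any closed-loop solution remaining inside
the funnel on `[0, T]`, `|ε̂ᵢ(x(t),t)| ≤ max (|ε̂ᵢ(x(0),0)|) (d̄·Φ̄/(4k))`, a bound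
independent of `T`. -/
theorem transformed_error_uniform_bound {n m : ℕ}
    (f : (Fin n → ℝ) → (Fin n → ℝ))
    (g : (Fin n → ℝ) → Matrix (Fin n) (Fin m) ℝ)
    (hf : LocallyLipschitz f)
    (hg : LocallyLipschitz (fun y => fun i j => g y i j))
    (hpd : ∀ y, (g y * (g y)ᵀ).PosDef)
    (γL γU γL' γU' : ℝ → Fin n → ℝ)
    (hγL : ∀ t ∈ Ici (0 : ℝ), HasDerivAt γL (γL' t) t)
    (hγU : ∀ t ∈ Ici (0 : ℝ), HasDerivAt γU (γU' t) t)
    (hγL'c : ContinuousOn γL' (Ici 0)) (hγU'c : ContinuousOn γU' (Ici 0))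
    (hbdd : ∃ C : ℝ, ∀ t ∈ Ici (0 : ℝ),
      ‖γL t‖ ≤ C ∧ ‖γU t‖ ≤ C ∧ ‖γL' t‖ ≤ C ∧ ‖γU' t‖ ≤ C)
    (hgap : ∃ δ > (0 : ℝ), ∀ t ∈ Ici (0 : ℝ), ∀ i, δ ≤ γU t i - γL t i)
    (k : ℝ) (hk : 0 < k)
    (K : Set (Fin n → ℝ))
    (hK : K = closure {y : Fin n → ℝ | ∃ t ∈ Ici (0 : ℝ), ∀ i, γL t i ≤ y i ∧ y i ≤ γU t i})
    (Φbar dbar : ℝ)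
    (hΦbar : Φbar = sSup {r : ℝ | ∃ y ∈ K, ∃ t ∈ Ici (0 : ℝ), ∃ i,
      r = |f y i - (1 / 2) * (γU' t i + γL' t i)|})
    (hdbar : dbar = sSup {r : ℝ | ∃ t ∈ Ici (0 : ℝ), ∃ i, r = γU t i - γL t i})
    (T : ℝ) (hT : 0 < T)
    (x : ℝ → Fin n → ℝ)
    (hode : ∀ t ∈ Icc (0 : ℝ) T,
      HasDerivAt x
        (f (x t) + (g (x t)).mulVec (funnelController k g γL γU γL' γU' (x t) t)) t)
    (hin : ∀ t ∈ Icc (0 : ℝ) T, ∀ i, γL t i < x t i ∧ x t i < γU t i) :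
    ∀ i, ∀ t ∈ Icc (0 : ℝ) T,
      |terr (γL t i) (γU t i) (x t i)| ≤
        max (|terr (γL 0 i) (γU 0 i) (x 0 i)|) (dbar * Φbar / (4 * k)) :=
  transformed_error_uniform_bound_general f g hf hpd γL γU γL' γU' hγL hγU hbdd k hk K hK Φbar dbar
    hΦbar hdbar T x hode hin
end

section
/- (Theorem 2: invariance of the circumvent-modified funnel and obstacle avoidance.) Consider the system ẋ = f(x) + g(x)u with f, g locally Lipschitz and g(x)g(x)ᵀ positive definite. Let (ρ_L, ρ_U) be a reachability funnel, let i* be a fixed coordinate, let β : [0,∞) → ℝ be a circumvent function (continuously differentiable with bounded derivative, bounded), and let α : [0,∞) → ℝⁿ be continuously differentiable, nonnegative, bounded, with bounded derivative. Define the modified funnel by γ_{i*,L}(t) = (1/ν)·ln(exp(ν·ρ_{i*,L}(t)) + exp(ν·β(t))) for a fixed ν > 0, γ_{i*,U}(t) = ρ_{i*,U}(t) + α_{i*}(t), and γ_{i,L} = ρ_{i,L}, γ_{i,U} = ρ_{i,U} for i ≠ i*, and assume inf over t ≥ 0 and i of (γ_{i,U}(t) − γ_{i,L}(t)) is positive.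 Then, with the funnel controller û (gain k > 0) built from (γ_L, γ_U), every admissible closed-loop solution x : [0,∞) → ℝⁿ satisfies γ_{i,L}(t) < x_i(t) < γ_{i,U}(t) for all t ≥ 0 and all i; in particular, x_{i*}(t) > β(t) for all t ≥ 0, so the trajectory stays strictly above the circumvent function at all times. -/
open Matrix Set

/-- Reachability funnel function `ρᵢ(t) = (1 − ρ_{i,∞})·e^{−lᵢt} + ρ_{i,∞}`. -/
noncomputable def rhoFun (ρinf l t : ℝ) : ℝ := (1 - ρinf) * Real.exp (-l * t) + ρinf

/-- Lower reachability funnel boundary `ρ_{i,L}(t) = ηᵢ − c̲ᵢ ρᵢ(t)` with `c̲ᵢ = ηᵢ − X̲ᵢ`. -/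
noncomputable def rhoL {n : ℕ} (η Xlow l ρinf : Fin n → ℝ) : ℝ → Fin n → ℝ :=
  fun t i => η i - (η i - Xlow i) * rhoFun (ρinf i) (l i) t

/-- Upper reachability funnel boundary `ρ_{i,U}(t) = ηᵢ + c̄ᵢ ρᵢ(t)` with `c̄ᵢ = X̄ᵢ − ηᵢ`. -/
noncomputable def rhoU {n : ℕ} (η Xhigh l ρinf : Fin n → ℝ) : ℝ → Fin n → ℝ :=
  fun t i => η i + (Xhigh i - η i) * rhoFun (ρinf i) (l i) t

/-!
Along an admissible solution each transformed error satisfies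
`ε̇ᵢ = ξ̂ᵢ (fᵢ(x) − (γ̇_{i,U} + γ̇_{i,L})/2) − k ξ̂ᵢ² εᵢ`: the controller cancels the input matrix,
and its `½ γ̇_d ê` term cancels the change of the funnel width. Up to the first exit time `τ`
the bracket is bounded by continuity on `[0, τ]`, and `ξ̂ᵢ ≥ 4 / sup (γ_U − γ_L)`, so `εᵢ²` cannot
cross a sufficiently high level. A bound on `εᵢ` keeps `xᵢ − γ_{i,L}` and `γ_{i,U} − xᵢ` within a
fixed ratio of each other; this closed condition persists at `τ`, where it forces `xᵢ` to lie
strictly inside the funnel, contradicting the exit. Finally `γ_{i*,L}` is a smooth maximum of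
`ρ_{i*,L}` and `β`, hence lies strictly above `β`.
-/

lemma one_add_nerr {L U : ℝ} (z : ℝ) (h : L ≠ U) : 1 + nerr L U z = 2 * (z - L) / (U - L) := by
  rw [nerr, eq_div_iff (sub_ne_zero.2 h.symm)]
  field_simp [sub_ne_zero.2 h.symm]
  ring

lemma one_sub_nerr {L U : ℝ} (z : ℝ) (h : L ≠ U) : 1 - nerr L U z = 2 * (U - z) / (U - L) := by
  rw [nerr, eq_div_iff (sub_ne_zero.2 h.symm)]
  field_simp [sub_ne_zero.2 h.symm]
  ring

lemma terr_eq_log_sub_log {L U z : ℝ} (h : z ∈ Ioo L U) :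
    terr L U z = Real.log (z - L) - Real.log (U - z) := by
  obtain ⟨hL, hU⟩ := h
  have hLU : L ≠ U := (hL.trans hU).ne
  rw [terr, one_add_nerr z hLU, one_sub_nerr z hLU, div_div_div_cancel_right₀ (by linarith),
    mul_div_mul_left _ _ two_ne_zero, Real.log_div (by linarith) (by linarith)]

lemma xhat_eq_div {L U z : ℝ} (h : z ∈ Ioo L U) :
    xhat L U z = (U - L) / ((z - L) * (U - z)) := by
  obtain ⟨hL, hU⟩ := h
  have hLU : L ≠ U := (hL.trans hU).ne
  have hsq : 1 - nerr L U z ^ 2 = (1 + nerr L U z) * (1 - nerr L U z) := by ring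
  rw [xhat, hsq, one_add_nerr z hLU, one_sub_nerr z hLU]
  have : U - L ≠ 0 := by linarith
  field_simp
  ring

lemma four_div_le_xhat_s16 {L U z Γ : ℝ} (h : z ∈ Ioo L U) (hΓ : U - L ≤ Γ) :
    4 / Γ ≤ xhat L U z := by
  obtain ⟨hL, hU⟩ := h
  rw [xhat_eq_div ⟨hL, hU⟩, div_le_div_iff₀ (by linarith) (by nlinarith)]
  nlinarith [four_mul_le_sq_add (z - L) (U - z)]

lemma HasDerivAt.terr {ℓ u z : ℝ → ℝ} {ℓ' u' z' t : ℝ} (hℓ : HasDerivAt ℓ ℓ' t)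
    (hu : HasDerivAt u u' t) (hz : HasDerivAt z z' t) (h : z t ∈ Ioo (ℓ t) (u t)) :
    HasDerivAt (fun s => terr (ℓ s) (u s) (z s))
      (xhat (ℓ t) (u t) (z t) *
        (z' - (u' + ℓ') / 2 - nerr (ℓ t) (u t) (z t) * (u' - ℓ') / 2)) t := by
  obtain ⟨hℓz, hzu⟩ := h
  have hinside : ∀ᶠ s in nhds t, z s ∈ Ioo (ℓ s) (u s) :=
    (hℓ.continuousAt.eventually_lt hz.continuousAt hℓz).and
      (hz.continuousAt.eventually_lt hu.continuousAt hzu)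
  have hlog := ((hz.sub hℓ).log (sub_pos.2 hℓz).ne').sub ((hu.sub hz).log (sub_pos.2 hzu).ne')
  refine (hlog.congr_of_eventuallyEq
    (hinside.mono fun s hs => terr_eq_log_sub_log hs)).congr_deriv ?_
  have hℓu : u t - ℓ t ≠ 0 := by linarith
  rw [xhat_eq_div ⟨hℓz, hzu⟩, nerr, Pi.sub_apply, Pi.sub_apply]
  field_simp [(sub_pos.2 hℓz).ne', (sub_pos.2 hzu).ne']
  ring

lemma abs_le_of_hasDerivAt_mul_sub {ε ξ Φ : ℝ → ℝ} {a b k ξ₀ M c : ℝ} (hk : 0 < k)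
    (hε : ∀ s ∈ Ico a b, HasDerivAt ε (ξ s * (Φ s - k * ξ s * ε s)) s)
    (hξ₀ : 0 < ξ₀) (hξ : ∀ s ∈ Ico a b, ξ₀ ≤ ξ s) (hΦ : ∀ s ∈ Ico a b, |Φ s| ≤ M)
    (hc : M < k * ξ₀ * c) (ha : |ε a| ≤ c) :
    ∀ s ∈ Ico a b, |ε s| ≤ c := by
  intro s hs
  have hc0 : 0 ≤ c := (abs_nonneg _).trans ha
  -- `ε²` cannot cross the level `c²`, where its derivative is negative.
  have hsq : ε s ^ 2 ≤ c ^ 2 := by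
    refine image_le_of_deriv_right_lt_deriv_boundary (f := fun r => ε r ^ 2)
      (f' := fun r => 2 * ε r * (ξ r * (Φ r - k * ξ r * ε r))) (B' := fun _ => 0)
      (fun r hr => (hε r ⟨hr.1, hr.2.trans_lt hs.2⟩).continuousAt.pow 2 |>.continuousWithinAt)
      (fun r hr => ((hε r ⟨hr.1, hr.2.trans hs.2⟩).pow 2).hasDerivWithinAt.congr_deriv
        (by simp only [Nat.cast_ofNat]; ring))
      (by simpa only [sq_abs] using pow_le_pow_left₀ (abs_nonneg _) ha 2)
      (fun _ => hasDerivAt_const _ _) (fun r hr hr_eq => ?_) ⟨hs.1, le_rfl⟩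
    have hr' : r ∈ Ico a b := ⟨hr.1, hr.2.trans_le hs.2.le⟩
    have hεr : |ε r| = c := by
      rw [← sq_eq_sq₀ (abs_nonneg _) hc0, sq_abs]; exact hr_eq
    have hξr : 0 < ξ r := hξ₀.trans_le (hξ r hr')
    have hcpos : 0 < c := by
      by_contra! h
      have : k * ξ₀ * c ≤ 0 := mul_nonpos_of_nonneg_of_nonpos (by positivity) h
      linarith [(abs_nonneg _).trans (hΦ r hr')]
    have hεΦ : ε r * Φ r ≤ c * M := by
      calc ε r * Φ r ≤ |ε r| * |Φ r| := (le_abs_self _).trans (abs_mul _ _).le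
        _ ≤ c * M := by rw [hεr]; exact mul_le_mul_of_nonneg_left (hΦ r hr') hc0
    have hgain : M < k * ξ r * c := hc.trans_le (by gcongr; exact hξ r hr')
    have hneg : ε r * Φ r - k * ξ r * ε r ^ 2 < 0 := by
      rw [hr_eq]; nlinarith
    show 2 * ε r * (ξ r * (Φ r - k * ξ r * ε r)) < 0
    nlinarith
  exact abs_le_of_sq_le_sq hsq hc0

lemma sub_le_exp_mul_of_abs_terr_le {L U z c : ℝ} (h : z ∈ Ioo L U) (hc : |terr L U z| ≤ c) :
    z - L ≤ Real.exp c * (U - z) ∧ U - z ≤ Real.exp c * (z - L) := by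
  have hzL : 0 < z - L := sub_pos.2 h.1
  have hUz : 0 < U - z := sub_pos.2 h.2
  rw [terr_eq_log_sub_log h, abs_le] at hc
  constructor
  · rw [← Real.log_le_log_iff hzL (by positivity), Real.log_mul (Real.exp_pos c).ne' hUz.ne',
      Real.log_exp]
    linarith
  · rw [← Real.log_le_log_iff hUz (by positivity), Real.log_mul (Real.exp_pos c).ne' hzL.ne',
      Real.log_exp]
    linarith

lemma mem_Ioo_of_sub_le_exp_mul {L U z c : ℝ} (hLU : L < U) (hL : z - L ≤ Real.exp c * (U - z))
    (hU : U - z ≤ Real.exp c * (z - L)) : z ∈ Ioo L U := by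
  have := Real.exp_pos c
  constructor <;> by_contra! h <;> nlinarith

lemma mem_Ioo_of_closedLoop_on_Ico {ℓ u z ℓ' u' F : ℝ → ℝ} {a b k : ℝ} (hk : 0 < k) (hab : a < b)
    (hℓ : ∀ s ∈ Icc a b, HasDerivAt ℓ (ℓ' s) s) (hu : ∀ s ∈ Icc a b, HasDerivAt u (u' s) s)
    (hℓ'c : ContinuousOn ℓ' (Icc a b)) (hu'c : ContinuousOn u' (Icc a b))
    (hFc : ContinuousOn F (Icc a b)) (hzc : ContinuousOn z (Icc a b))
    (hz : ∀ s ∈ Ico a b, HasDerivAt z (F s - (k * xhat (ℓ s) (u s) (z s) * terr (ℓ s) (u s) (z s)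
      - 1 / 2 * (u' s - ℓ' s) * nerr (ℓ s) (u s) (z s))) s)
    (hin : ∀ s ∈ Ico a b, z s ∈ Ioo (ℓ s) (u s)) (hℓu : ℓ b < u b) :
    z b ∈ Ioo (ℓ b) (u b) := by
  have hℓc : ContinuousOn ℓ (Icc a b) := fun s hs => (hℓ s hs).continuousAt.continuousWithinAt
  have huc : ContinuousOn u (Icc a b) := fun s hs => (hu s hs).continuousAt.continuousWithinAt
  set ε := fun s => terr (ℓ s) (u s) (z s)
  set ξ := fun s => xhat (ℓ s) (u s) (z s)
  set Φ := fun s => F s - (u' s + ℓ' s) / 2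
  have hε : ∀ s ∈ Ico a b, HasDerivAt ε (ξ s * (Φ s - k * ξ s * ε s)) s := fun s hs =>
    ((hℓ s (Ico_subset_Icc_self hs)).terr (hu s (Ico_subset_Icc_self hs)) (hz s hs)
      (hin s hs)).congr_deriv (by simp only [ξ, Φ, ε]; ring)
  obtain ⟨M, hM⟩ := isCompact_Icc.bddAbove_image (hFc.sub ((hu'c.add hℓ'c).div_const 2)).abs
  obtain ⟨Γ, hΓ⟩ := isCompact_Icc.bddAbove_image (huc.sub hℓc)
  have hΓa : u a - ℓ a ≤ Γ := hΓ (mem_image_of_mem _ (left_mem_Icc.2 hab.le))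
  have hΓpos : 0 < Γ := by linarith [(hin a (left_mem_Ico.2 hab)).1, (hin a (left_mem_Ico.2 hab)).2]
  set c := max |ε a| ((M + 1) / (k * (4 / Γ)))
  have hbound : ∀ s ∈ Ico a b, |ε s| ≤ c :=
    abs_le_of_hasDerivAt_mul_sub hk hε (by positivity)
      (fun s hs => four_div_le_xhat_s16 (hin s hs) (hΓ (mem_image_of_mem _ (Ico_subset_Icc_self hs))))
      (fun s hs => hM (mem_image_of_mem _ (Ico_subset_Icc_self hs)))
      ((lt_add_one M).trans_le (by
        rw [mul_comm]; exact (div_le_iff₀ (by positivity)).1 (le_max_right _ _)))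
      (le_max_left _ _)
  -- The bound on `ε` is a closed condition on `(ℓ, u, z)`, so it survives at `b`.
  have hcl : closure (Ico a b) = Icc a b := closure_Ico hab.ne
  have hb : b ∈ closure (Ico a b) := hcl ▸ right_mem_Icc.2 hab.le
  refine mem_Ioo_of_sub_le_exp_mul (c := c) hℓu ?_ ?_
  · exact le_on_closure (fun s hs => (sub_le_exp_mul_of_abs_terr_le (hin s hs) (hbound s hs)).1)
      (by rw [hcl]; fun_prop) (by rw [hcl]; fun_prop) hb
  · exact le_on_closure (fun s hs => (sub_le_exp_mul_of_abs_terr_le (hin s hs) (hbound s hs)).2)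
      (by rw [hcl]; fun_prop) (by rw [hcl]; fun_prop) hb

noncomputable def funnelFeedback {ι : Type*} (k : ℝ) (L U L' U' : ℝ → ι → ℝ) (y : ι → ℝ)
    (t : ℝ) : ι → ℝ :=
  fun i => k * xhat (L t i) (U t i) (y i) * terr (L t i) (U t i) (y i)
    - (1 / 2) * (U' t i - L' t i) * nerr (L t i) (U t i) (y i)

theorem funnel_invariant {ι : Type*} [Fintype ι] {L U L' U' x F : ℝ → ι → ℝ} {k : ℝ} (hk : 0 < k)
    (hL : ∀ t ∈ Ici (0 : ℝ), HasDerivAt L (L' t) t) (hU : ∀ t ∈ Ici (0 : ℝ), HasDerivAt U (U' t) t)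
    (hL'c : ContinuousOn L' (Ici 0)) (hU'c : ContinuousOn U' (Ici 0))
    (hLU : ∀ t ∈ Ici (0 : ℝ), ∀ i, L t i < U t i)
    (hFc : ContinuousOn F (Ici 0)) (hxc : ContinuousOn x (Ici 0))
    (hx0 : ∀ i, x 0 i ∈ Ioo (L 0 i) (U 0 i))
    (hx : ∀ t ∈ Ici (0 : ℝ), (∀ s ∈ Icc 0 t, ∀ i, x s i ∈ Ioo (L s i) (U s i)) →
      HasDerivAt x (F t - funnelFeedback k L U L' U' (x t) t) t) :
    ∀ t ∈ Ici (0 : ℝ), ∀ i, x t i ∈ Ioo (L t i) (U t i) := by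
  by_contra! ⟨t₀, ht₀, i₀, hout⟩
  have hcoord : ∀ {G : ℝ → ι → ℝ}, ContinuousOn G (Ici 0) → ∀ i {t : ℝ},
      ContinuousOn (fun s => G s i) (Icc 0 t) :=
    fun hG i _ => (continuousOn_pi.1 hG i).mono Icc_subset_Ici_self
  have hLc : ContinuousOn L (Ici 0) := fun t ht => (hL t ht).continuousAt.continuousWithinAt
  have hUc : ContinuousOn U (Ici 0) := fun t ht => (hU t ht).continuousAt.continuousWithinAt
  -- the first exit time is the least element of the closed set `B` of exit times before `t₀`
  set B := ⋃ i, ({t ∈ Icc 0 t₀ | x t i ≤ L t i} ∪ {t ∈ Icc 0 t₀ | U t i ≤ x t i})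
  have hmemB : ∀ t, t ∈ B ↔ t ∈ Icc 0 t₀ ∧ ∃ i, x t i ∉ Ioo (L t i) (U t i) := by
    intro t
    simp only [B, mem_iUnion, mem_union, mem_ofPred_eq, mem_Ioo, not_and_or, not_lt]
    aesop
  have hB : IsClosed B := isClosed_iUnion_of_finite fun i =>
    (isClosed_Icc.isClosed_le (hcoord hxc i) (hcoord hLc i)).union
      (isClosed_Icc.isClosed_le (hcoord hUc i) (hcoord hxc i))
  obtain ⟨hτB, hτmin⟩ :=
    hB.isLeast_csInf ⟨t₀, (hmemB t₀).2 ⟨⟨ht₀, le_rfl⟩, i₀, hout⟩⟩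
      ⟨0, fun t ht => ((hmemB t).1 ht).1.1⟩
  set τ := sInf B
  obtain ⟨⟨hτ0, hτt₀⟩, i, hi⟩ := (hmemB τ).1 hτB
  have hbefore : ∀ s ∈ Ico 0 τ, ∀ j, x s j ∈ Ioo (L s j) (U s j) := fun s hs j => by
    by_contra h
    exact (hτmin ((hmemB s).2 ⟨⟨hs.1, hs.2.le.trans hτt₀⟩, j, h⟩)).not_gt hs.2
  have hτpos : 0 < τ := hτ0.lt_of_ne (by rintro h; rw [← h] at hi; exact hi (hx0 i))
  exact hi <| mem_Ioo_of_closedLoop_on_Ico hk hτpos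
    (fun s hs => hasDerivAt_pi.1 (hL s hs.1) i) (fun s hs => hasDerivAt_pi.1 (hU s hs.1) i)
    (hcoord hL'c i) (hcoord hU'c i) (hcoord hFc i) (hcoord hxc i)
    (fun s hs => hasDerivAt_pi.1 (hx s hs.1 fun r hr => hbefore r ⟨hr.1, hr.2.trans_lt hs.2⟩) i)
    (fun s hs => hbefore s hs i) (hLU τ hτ0 i)

lemma mulVec_funnelController_s16 {n m : ℕ} (k : ℝ) (g : (Fin n → ℝ) → Matrix (Fin n) (Fin m) ℝ)
    (L U L' U' : ℝ → Fin n → ℝ) (y : Fin n → ℝ) (t : ℝ) (hpd : (g y * (g y)ᵀ).PosDef) :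
    g y *ᵥ funnelController k g L U L' U' y t = -funnelFeedback k L U L' U' y t := by
  rw [funnelController, mulVec_neg, mulVec_mulVec, mulVec_mulVec,
    mul_nonsing_inv _ hpd.det_pos.ne'.isUnit, one_mulVec]
  rfl

noncomputable def smoothMax (ν a b : ℝ) : ℝ :=
  1 / ν * Real.log (Real.exp (ν * a) + Real.exp (ν * b))

lemma right_lt_smoothMax {ν : ℝ} (hν : 0 < ν) (a b : ℝ) : b < smoothMax ν a b := by
  rw [smoothMax, one_div, lt_inv_mul_iff₀ hν, Real.lt_log_iff_exp_lt (by positivity)]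
  exact lt_add_of_pos_left _ (Real.exp_pos _)

lemma HasDerivAt.smoothMax {a b : ℝ → ℝ} {a' b' ν t : ℝ} (hν : ν ≠ 0) (ha : HasDerivAt a a' t)
    (hb : HasDerivAt b b' t) :
    HasDerivAt (fun s => smoothMax ν (a s) (b s))
      ((Real.exp (ν * a t) * a' + Real.exp (ν * b t) * b') /
        (Real.exp (ν * a t) + Real.exp (ν * b t))) t := by
  have hpos : 0 < Real.exp (ν * a t) + Real.exp (ν * b t) := by positivity
  have := (((ha.const_mul ν).exp.add (hb.const_mul ν).exp).log hpos.ne').const_mul (1 / ν)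
  refine this.congr_deriv ?_
  simp only [Pi.add_apply]
  field_simp

lemma contDiff_rhoL_apply {n : ℕ} (η Xlow l ρinf : Fin n → ℝ) (i : Fin n) :
    ContDiff ℝ ⊤ fun t => rhoL η Xlow l ρinf t i := by
  unfold rhoL rhoFun; fun_prop

lemma contDiff_rhoU_apply {n : ℕ} (η Xhigh l ρinf : Fin n → ℝ) (i : Fin n) :
    ContDiff ℝ ⊤ fun t => rhoU η Xhigh l ρinf t i := by
  unfold rhoU rhoFun; fun_prop

lemma continuousOn_circumventLower_deriv {n : ℕ} {η Xlow l ρinf : Fin n → ℝ} {istar : Fin n}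
    {ν : ℝ} (hν : ν ≠ 0) {β β' : ℝ → ℝ} (hβ : ∀ t ∈ Ici (0 : ℝ), HasDerivAt β (β' t) t)
    (hβ'c : ContinuousOn β' (Ici 0)) {γL γL' : ℝ → Fin n → ℝ}
    (hγLdef : ∀ t i, γL t i = if i = istar then smoothMax ν (rhoL η Xlow l ρinf t i) (β t)
      else rhoL η Xlow l ρinf t i)
    (hγL : ∀ t ∈ Ici (0 : ℝ), HasDerivAt γL (γL' t) t) :
    ContinuousOn γL' (Ici 0) := by
  refine continuousOn_pi.2 fun i => ?_
  set ρ := fun t => rhoL η Xlow l ρinf t i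
  have hρ : ContDiff ℝ ⊤ ρ := contDiff_rhoL_apply η Xlow l ρinf i
  have hρd : ∀ t, HasDerivAt ρ (deriv ρ t) t := fun t => (hρ.differentiable (by simp) t).hasDerivAt
  have hρ'c : Continuous (deriv ρ) := hρ.continuous_deriv (by simp)
  by_cases hi : i = istar
  · have hρc : Continuous ρ := hρ.continuous
    have hβc : ContinuousOn β (Ici 0) := fun t ht => (hβ t ht).continuousAt.continuousWithinAt
    have hγLi : (fun s => γL s i) = fun s => smoothMax ν (ρ s) (β s) :=
      funext fun s => by simp [ρ, hγLdef, hi]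
    refine ContinuousOn.congr (f := fun t => (Real.exp (ν * ρ t) * deriv ρ t
        + Real.exp (ν * β t) * β' t) / (Real.exp (ν * ρ t) + Real.exp (ν * β t)))
      (by fun_prop (disch := intros; positivity)) fun t ht => ?_
    exact (hasDerivAt_pi.1 (hγL t ht) i).unique (hγLi ▸ (hρd t).smoothMax hν (hβ t ht))
  · have hγLi : (fun s => γL s i) = ρ := funext fun s => by simp [ρ, hγLdef, hi]
    exact hρ'c.continuousOn.congr fun t ht =>
      (hasDerivAt_pi.1 (hγL t ht) i).unique (hγLi ▸ hρd t)

lemma continuousOn_circumventUpper_deriv {n : ℕ} {η Xhigh l ρinf : Fin n → ℝ} {istar : Fin n}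
    {α α' : ℝ → Fin n → ℝ} (hα : ∀ t ∈ Ici (0 : ℝ), HasDerivAt α (α' t) t)
    (hα'c : ContinuousOn α' (Ici 0)) {γU γU' : ℝ → Fin n → ℝ}
    (hγUdef : ∀ t i, γU t i = if i = istar then rhoU η Xhigh l ρinf t i + α t i
      else rhoU η Xhigh l ρinf t i)
    (hγU : ∀ t ∈ Ici (0 : ℝ), HasDerivAt γU (γU' t) t) :
    ContinuousOn γU' (Ici 0) := by
  refine continuousOn_pi.2 fun i => ?_
  set ρ := fun t => rhoU η Xhigh l ρinf t i
  have hρ : ContDiff ℝ ⊤ ρ := contDiff_rhoU_apply η Xhigh l ρinf i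
  have hρd : ∀ t, HasDerivAt ρ (deriv ρ t) t := fun t => (hρ.differentiable (by simp) t).hasDerivAt
  have hρ'c : Continuous (deriv ρ) := hρ.continuous_deriv (by simp)
  by_cases hi : i = istar
  · have hγUi : (fun s => γU s i) = fun s => ρ s + α s i := funext fun s => by simp [ρ, hγUdef, hi]
    refine (hρ'c.continuousOn.add (continuousOn_pi.1 hα'c i)).congr fun t ht => ?_
    exact (hasDerivAt_pi.1 (hγU t ht) i).unique (hγUi ▸ (hρd t).add (hasDerivAt_pi.1 (hα t ht) i))
  · have hγUi : (fun s => γU s i) = ρ := funext fun s => by simp [ρ, hγUdef, hi]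
    exact hρ'c.continuousOn.congr fun t ht =>
      (hasDerivAt_pi.1 (hγU t ht) i).unique (hγUi ▸ hρd t)

theorem circumvent_funnel_invariance_general {n m : ℕ}
    (f : (Fin n → ℝ) → (Fin n → ℝ))
    (g : (Fin n → ℝ) → Matrix (Fin n) (Fin m) ℝ)
    (hf : LocallyLipschitz f)
    (hpd : ∀ y, (g y * (g y)ᵀ).PosDef)
    (Xlow Xhigh η l ρinf : Fin n → ℝ)
    (istar : Fin n) (ν : ℝ) (hν : 0 < ν)
    -- circumvent function: continuously differentiable, bounded, with bounded derivative
    (β β' : ℝ → ℝ)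
    (hβ : ∀ t ∈ Ici (0 : ℝ), HasDerivAt β (β' t) t)
    (hβ'c : ContinuousOn β' (Ici 0))
    -- update function: continuously differentiable, nonnegative, bounded,
    -- with bounded derivative
    (α α' : ℝ → Fin n → ℝ)
    (hα : ∀ t ∈ Ici (0 : ℝ), HasDerivAt α (α' t) t)
    (hα'c : ContinuousOn α' (Ici 0))
    -- the modified funnel and its derivative
    (γL γU γL' γU' : ℝ → Fin n → ℝ)
    (hγLdef : ∀ t : ℝ, ∀ i,
      γL t i = if i = istar then
          (1 / ν) * Real.log (Real.exp (ν * rhoL η Xlow l ρinf t i) + Real.exp (ν * β t))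
        else rhoL η Xlow l ρinf t i)
    (hγUdef : ∀ t : ℝ, ∀ i,
      γU t i = if i = istar then rhoU η Xhigh l ρinf t i + α t i
        else rhoU η Xhigh l ρinf t i)
    (hγL : ∀ t ∈ Ici (0 : ℝ), HasDerivAt γL (γL' t) t)
    (hγU : ∀ t ∈ Ici (0 : ℝ), HasDerivAt γU (γU' t) t)
    (hgap : ∃ δ > (0 : ℝ), ∀ t ∈ Ici (0 : ℝ), ∀ i, δ ≤ γU t i - γL t i)
    (k : ℝ) (hk : 0 < k)
    -- admissible closed-loop solution
    (x : ℝ → Fin n → ℝ)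
    (hxc : ContinuousOn x (Ici 0))
    (hx0 : ∀ i, γL 0 i < x 0 i ∧ x 0 i < γU 0 i)
    (hode : ∀ t ∈ Ici (0 : ℝ),
      (∀ s ∈ Icc (0 : ℝ) t, ∀ i, γL s i < x s i ∧ x s i < γU s i) →
      HasDerivAt x
        (f (x t) + (g (x t)).mulVec (funnelController k g γL γU γL' γU' (x t) t)) t) :
    (∀ t ∈ Ici (0 : ℝ), ∀ i, γL t i < x t i ∧ x t i < γU t i) ∧
      (∀ t ∈ Ici (0 : ℝ), β t < x t istar) := by
  obtain ⟨δ, hδ, hgapδ⟩ := hgap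
  have hLU : ∀ t ∈ Ici (0 : ℝ), ∀ i, γL t i < γU t i := fun t ht i => by
    linarith [hgapδ t ht i]
  have hinv : ∀ t ∈ Ici (0 : ℝ), ∀ i, x t i ∈ Ioo (γL t i) (γU t i) :=
    funnel_invariant hk hγL hγU (continuousOn_circumventLower_deriv hν.ne' hβ hβ'c hγLdef hγL)
      (continuousOn_circumventUpper_deriv hα hα'c hγUdef hγU)
      hLU (hf.continuous.comp_continuousOn hxc) hxc hx0 fun t ht hin => by
        simpa only [mulVec_funnelController_s16 k g γL γU γL' γU' (x t) t (hpd (x t)),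
          ← sub_eq_add_neg, Function.comp_apply] using hode t ht hin
  refine ⟨hinv, fun t ht => ?_⟩
  have hβγ : β t < γL t istar := by
    rw [hγLdef, if_pos rfl]
    exact right_lt_smoothMax hν _ _
  exact hβγ.trans (hinv t ht istar).1

/-- Theorem 2 (invariance of the circumvent-modified funnel and obstacle avoidance):
with the funnel controller built from the modified funnel, every admissible closed-loop
solution stays strictly inside the modified funnel for all time; in particular
`x_{i*}(t) > β(t)` for all `t ≥ 0`. -/
theorem circumvent_funnel_invariance {n m : ℕ}
    (f : (Fin n → ℝ) → (Fin n → ℝ))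
    (g : (Fin n → ℝ) → Matrix (Fin n) (Fin m) ℝ)
    (hf : LocallyLipschitz f)
    (hg : LocallyLipschitz (fun y => fun i j => g y i j))
    (hpd : ∀ y, (g y * (g y)ᵀ).PosDef)
    (Xlow Xhigh η l ρinf : Fin n → ℝ)
    (hX : ∀ i, Xlow i < η i ∧ η i < Xhigh i)
    (hl : ∀ i, 0 < l i)
    (hρinf : ∀ i, ρinf i ∈ Ioo (0 : ℝ) 1)
    (istar : Fin n) (ν : ℝ) (hν : 0 < ν)
    -- circumvent function: continuously differentiable, bounded, with bounded derivative
    (β β' : ℝ → ℝ)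
    (hβ : ∀ t ∈ Ici (0 : ℝ), HasDerivAt β (β' t) t)
    (hβ'c : ContinuousOn β' (Ici 0))
    (hβbdd : ∃ C : ℝ, ∀ t ∈ Ici (0 : ℝ), |β t| ≤ C ∧ |β' t| ≤ C)
    -- update function: continuously differentiable, nonnegative, bounded,
    -- with bounded derivative
    (α α' : ℝ → Fin n → ℝ)
    (hα : ∀ t ∈ Ici (0 : ℝ), HasDerivAt α (α' t) t)
    (hα'c : ContinuousOn α' (Ici 0))
    (hαnonneg : ∀ t ∈ Ici (0 : ℝ), ∀ i, 0 ≤ α t i)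
    (hαbdd : ∃ C : ℝ, ∀ t ∈ Ici (0 : ℝ), ‖α t‖ ≤ C ∧ ‖α' t‖ ≤ C)
    -- the modified funnel and its derivative
    (γL γU γL' γU' : ℝ → Fin n → ℝ)
    (hγLdef : ∀ t : ℝ, ∀ i,
      γL t i = if i = istar then
          (1 / ν) * Real.log (Real.exp (ν * rhoL η Xlow l ρinf t i) + Real.exp (ν * β t))
        else rhoL η Xlow l ρinf t i)
    (hγUdef : ∀ t : ℝ, ∀ i,
      γU t i = if i = istar then rhoU η Xhigh l ρinf t i + α t i
        else rhoU η Xhigh l ρinf t i)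
    (hγL : ∀ t ∈ Ici (0 : ℝ), HasDerivAt γL (γL' t) t)
    (hγU : ∀ t ∈ Ici (0 : ℝ), HasDerivAt γU (γU' t) t)
    (hgap : ∃ δ > (0 : ℝ), ∀ t ∈ Ici (0 : ℝ), ∀ i, δ ≤ γU t i - γL t i)
    (k : ℝ) (hk : 0 < k)
    -- admissible closed-loop solution
    (x : ℝ → Fin n → ℝ)
    (hxc : ContinuousOn x (Ici 0))
    (hx0 : ∀ i, γL 0 i < x 0 i ∧ x 0 i < γU 0 i)
    (hode : ∀ t ∈ Ici (0 : ℝ),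
      (∀ s ∈ Icc (0 : ℝ) t, ∀ i, γL s i < x s i ∧ x s i < γU s i) →
      HasDerivAt x
        (f (x t) + (g (x t)).mulVec (funnelController k g γL γU γL' γU' (x t) t)) t) :
    (∀ t ∈ Ici (0 : ℝ), ∀ i, γL t i < x t i ∧ x t i < γU t i) ∧
      (∀ t ∈ Ici (0 : ℝ), β t < x t istar) :=
  circumvent_funnel_invariance_general f g hf hpd Xlow Xhigh η l ρinf istar ν hν β β' hβ hβ'c α α'
    hα hα'c γL γU γL' γU' hγLdef hγUdef hγL hγU hgap k hk x hxc hx0 hode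
end
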